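/- Let X be a complex Banach space which is M-embedded. Then every separable closed subspace Y of X has a separable dual space Y*. -/

import Mathlib

open NormedSpace

noncomputable section

set_option maxHeartbeats 1000000

instance strongDualSeminormedAddCommGroup {E : Type*} [SeminormedAddCommGroup E]
    [NormedSpace ℂ E] : SeminormedAddCommGroup (StrongDual ℂ E) :=
  ContinuousLinearMap.toSeminormedAddCommGroup

instance strongDualNormedSpace {E : Type*} [SeminormedAddCommGroup E] [NormedSpace ℂ E] :
    NormedSpace ℂ (StrongDual ℂ E) :=
  ContinuousLinearMap.toNormedSpace

/-- The transpose (dual map) of a continuous linear map between (semi)normed spaces: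
`ctranspose f` sends a functional `g` to `g ∘ f`. -/
def ctranspose {E F : Type*} [SeminormedAddCommGroup E] [NormedSpace ℂ E]
    [SeminormedAddCommGroup F] [NormedSpace ℂ F] (f : E →L[ℂ] F) :
    StrongDual ℂ F →L[ℂ] StrongDual ℂ E :=
  (ContinuousLinearMap.compL ℂ E F ℂ).flip f

/-- A bounded linear projection `P` is an L-projection if `‖z‖ = ‖P z‖ + ‖z - P z‖`
for all `z`. -/
def IsLProjection {Z : Type*} [SeminormedAddCommGroup Z] [NormedSpace ℂ Z]
    (P : Z →L[ℂ] Z) : Prop :=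
  (∀ z, P (P z) = P z) ∧ ∀ z, ‖z‖ = ‖P z‖ + ‖z - P z‖

/-- A complex Banach space `X` is M-embedded if the annihilator `i_X(X)^⊥` is an
L-summand in `X***`. -/
def MEmbedded (X : Type*) [SeminormedAddCommGroup X] [NormedSpace ℂ X] : Prop :=
  ∃ P : StrongDual ℂ (StrongDual ℂ (StrongDual ℂ X)) →L[ℂ] StrongDual ℂ (StrongDual ℂ (StrongDual ℂ X)),
    IsLProjection (Z := StrongDual ℂ (StrongDual ℂ (StrongDual ℂ X))) P ∧
    Set.range P = {φ : StrongDual ℂ (StrongDual ℂ (StrongDual ℂ X)) |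
      ∀ x : X, φ (inclusionInDoubleDual ℂ X x) = 0}

/-!
For `φ ∈ X***` write `Q φ = i_{X*} (φ ∘ i_X)`. If `X` is M-embedded, the L-projection onto
`i_X(X)^⊥` can only be `id - Q`, so `‖φ‖ = ‖φ ∘ i_X‖ + ‖φ - Q φ‖`; in particular `φ ∈ i_{X*}(X*)`
as soon as `‖φ‖ ≤ ‖φ ∘ i_X‖`.

As `Y` is separable, the unit ball of `Y*` has a countable weak-* dense subset `D`. Given `g ∈ Y*`
of norm one, extend the elements of `D` to functionals on `X` of the same norm and take, by
Banach-Alaoglu, a weak-* limit point `φ ∈ X***` of their images that restricts to `g` on `Y`. Then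
`‖φ‖ ≤ 1 ≤ ‖φ ∘ i_X‖`, so `φ` comes from `X*` and `g` is a weak limit of elements of `D`; by
Hahn-Banach it lies in the norm-closed convex hull of `D`. So `Y*` is the closed span of `D`.
-/

section Transpose

variable {E F : Type*} [SeminormedAddCommGroup E] [NormedSpace ℂ E]
  [SeminormedAddCommGroup F] [NormedSpace ℂ F]

theorem norm_ctranspose_apply_le {f : E →L[ℂ] F} (hf : ‖f‖ ≤ 1) (g : StrongDual ℂ F) :
    ‖ctranspose f g‖ ≤ ‖g‖ :=
  (g.opNorm_comp_le f).trans (mul_le_of_le_one_right (norm_nonneg g) hf)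

theorem WeakDual.continuous_ctranspose (f : E →L[ℂ] F) :
    Continuous fun φ : WeakDual ℂ F =>
      StrongDual.toWeakDual (ctranspose f (WeakDual.toStrongDual φ)) :=
  WeakDual.continuous_of_continuous_eval fun x => WeakDual.eval_continuous (f x)

end Transpose

section LProjection

variable {Z : Type*} [SeminormedAddCommGroup Z] [NormedSpace ℂ Z] [T0Space Z]
  {P Q : Z →L[ℂ] Z}

theorem IsLProjection.apply_eq_sub (hP : IsLProjection P) (hQ : ∀ z, Q (Q z) = Q z)
    (hQ_norm : ∀ z, ‖Q z‖ ≤ ‖z‖) (hPQ : Set.range P = {z | Q z = 0}) (z : Z) :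
    P z = z - Q z := by
  have hQP : Q (P z) = 0 := hPQ.subset ⟨z, rfl⟩
  have hP_sub : P (z - P z) = 0 := by rw [map_sub, hP.1, sub_self]
  have hP_defect : P (z - P z - Q z) = z - P z - Q z := by
    obtain ⟨w, hw⟩ : z - P z - Q z ∈ Set.range P :=
      hPQ ▸ show Q (z - P z - Q z) = 0 by rw [map_sub, map_sub, hQ, hQP]; abel
    rw [← hw, hP.1]
  -- the L-identity at `Q z = (z - P z) - (z - P z - Q z)` splits off the defect `z - P z - Q z`
  have hL := hP.2 (Q z)
  rw [show Q z = z - P z - (z - P z - Q z) by abel, map_sub, hP_sub, hP_defect, zero_sub, norm_neg,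
    sub_neg_eq_add, sub_add_cancel, sub_sub_cancel] at hL
  have hQv : ‖Q (z - P z)‖ ≤ ‖z - P z‖ := hQ_norm _
  rw [map_sub, hQP, sub_zero] at hQv
  have h_defect : z - P z - Q z = 0 :=
    (inseparable_zero_iff_norm.mpr (by linarith [norm_nonneg (z - P z - Q z)])).eq
  rw [sub_sub, sub_eq_zero] at h_defect
  exact eq_sub_of_add_eq h_defect.symm

theorem IsLProjection.apply_eq_self_of_norm_le (hP : IsLProjection P) (hQ : ∀ z, Q (Q z) = Q z)
    (hQ_norm : ∀ z, ‖Q z‖ ≤ ‖z‖) (hPQ : Set.range P = {z | Q z = 0}) {z : Z}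
    (hz : ‖z‖ ≤ ‖Q z‖) : Q z = z := by
  have hL := hP.2 z
  rw [hP.apply_eq_sub hQ hQ_norm hPQ, sub_sub_cancel] at hL
  refine (sub_eq_zero.mp (inseparable_zero_iff_norm.mpr ?_).eq).symm
  linarith [norm_nonneg (z - Q z)]

end LProjection

section TripleDual

variable (X : Type*) [NormedAddCommGroup X] [NormedSpace ℂ X]

/-- The canonical projection of `X***` onto `i_{X*}(X*)` along `i_X(X)^⊥`. -/
def tripleDualProjection : StrongDual ℂ (StrongDual ℂ (StrongDual ℂ X)) →L[ℂ]
    StrongDual ℂ (StrongDual ℂ (StrongDual ℂ X)) :=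
  inclusionInDoubleDual ℂ (StrongDual ℂ X) ∘L ctranspose (inclusionInDoubleDual ℂ X)

variable {X}

theorem tripleDualProjection_apply (φ : StrongDual ℂ (StrongDual ℂ (StrongDual ℂ X))) :
    tripleDualProjection X φ =
      inclusionInDoubleDual ℂ (StrongDual ℂ X) (ctranspose (inclusionInDoubleDual ℂ X) φ) :=
  rfl

theorem ctranspose_inclusionInDoubleDual_inclusionInDoubleDual (g : StrongDual ℂ X) :
    ctranspose (inclusionInDoubleDual ℂ X) (inclusionInDoubleDual ℂ (StrongDual ℂ X) g) = g :=
  rfl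

theorem tripleDualProjection_idem (φ : StrongDual ℂ (StrongDual ℂ (StrongDual ℂ X))) :
    tripleDualProjection X (tripleDualProjection X φ) = tripleDualProjection X φ := by
  rw [tripleDualProjection_apply (tripleDualProjection X φ), tripleDualProjection_apply,
    ctranspose_inclusionInDoubleDual_inclusionInDoubleDual]

theorem norm_tripleDualProjection (φ : StrongDual ℂ (StrongDual ℂ (StrongDual ℂ X))) :
    ‖tripleDualProjection X φ‖ = ‖ctranspose (inclusionInDoubleDual ℂ X) φ‖ :=
  (inclusionInDoubleDualLi ℂ).norm_map _

theorem norm_tripleDualProjection_le (φ : StrongDual ℂ (StrongDual ℂ (StrongDual ℂ X))) :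
    ‖tripleDualProjection X φ‖ ≤ ‖φ‖ :=
  (norm_tripleDualProjection φ).trans_le
    (norm_ctranspose_apply_le (inclusionInDoubleDual_norm_le ℂ X) φ)

theorem tripleDualProjection_eq_zero_iff {φ : StrongDual ℂ (StrongDual ℂ (StrongDual ℂ X))} :
    tripleDualProjection X φ = 0 ↔ ∀ x, φ (inclusionInDoubleDual ℂ X x) = 0 := by
  rw [tripleDualProjection_apply]
  exact (map_eq_zero_iff _ (inclusionInDoubleDualLi ℂ).injective).trans ContinuousLinearMap.ext_iff

/-- The L-projection of an M-embedded space is `id - tripleDualProjection X`, so the L-identity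
reads `‖φ‖ = ‖φ ∘ i_X‖ + ‖φ - tripleDualProjection X φ‖`. -/
theorem MEmbedded.eq_tripleDualProjection_of_norm_le (hX : MEmbedded X)
    {φ : StrongDual ℂ (StrongDual ℂ (StrongDual ℂ X))}
    (hφ : ‖φ‖ ≤ ‖ctranspose (inclusionInDoubleDual ℂ X) φ‖) : φ = tripleDualProjection X φ := by
  obtain ⟨P, hP, hP_range⟩ := hX
  refine (IsLProjection.apply_eq_self_of_norm_le
    (Z := StrongDual ℂ (StrongDual ℂ (StrongDual ℂ X))) hP tripleDualProjection_idem
    (fun ψ => ?_) ?_ ?_).symm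
  · exact norm_tripleDualProjection_le ψ
  · rw [hP_range]
    ext ψ
    exact tripleDualProjection_eq_zero_iff.symm
  · rw [norm_tripleDualProjection]
    exact hφ

end TripleDual

theorem Submodule.eq_top_of_forall_norm_eq_one {𝕜 E : Type*} [RCLike 𝕜] [NormedAddCommGroup E]
    [NormedSpace 𝕜 E] {M : Submodule 𝕜 E} (h : ∀ x : E, ‖x‖ = 1 → x ∈ M) : M = ⊤ := by
  refine eq_top_iff'.2 fun x => ?_
  rcases eq_or_ne x 0 with rfl | hx
  · exact M.zero_mem
  · have := M.smul_mem (‖x‖ : 𝕜) (h _ (norm_smul_inv_norm (𝕜 := 𝕜) hx))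
    rwa [smul_smul, mul_inv_cancel₀ (by simpa using hx), one_smul] at this

namespace WeakDual

variable (𝕜 : Type*) [NontriviallyNormedField 𝕜] [ProperSpace 𝕜] (E : Type*)
  [SeminormedAddCommGroup E] [NormedSpace 𝕜 E] [TopologicalSpace.SeparableSpace E]

/-- The weak-* dual ball is compact and, `E` being separable, metrizable; hence separable. -/
theorem exists_countable_dense_closedBall (r : ℝ) :
    ∃ D ⊆ Metric.closedBall (0 : StrongDual 𝕜 E) r, D.Countable ∧
      toStrongDual ⁻¹' Metric.closedBall (0 : StrongDual 𝕜 E) r ⊆ closure (toStrongDual ⁻¹' D) := by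
  have hK := isCompact_closedBall (0 : StrongDual 𝕜 E) r
  have := isCompact_iff_compactSpace.mp hK
  have := metrizable_of_isCompact 𝕜 E _ hK
  obtain ⟨c, hc, hc_dense⟩ := TopologicalSpace.exists_countable_dense
    (toStrongDual ⁻¹' Metric.closedBall (0 : StrongDual 𝕜 E) r)
  refine ⟨toStrongDual '' ((↑) '' c), ?_, (hc.image _).image _, ?_⟩
  · rintro _ ⟨_, ⟨x, -, rfl⟩, rfl⟩
    exact x.2
  · rw [Set.preimage_image_eq _ toStrongDual.injective]
    exact Subtype.dense_iff.mp hc_dense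

end WeakDual

section WeakStarLift

variable {X Y : Type*} [NormedAddCommGroup X] [NormedSpace ℂ X]
  [SeminormedAddCommGroup Y] [NormedSpace ℂ Y]

/-- By Banach-Alaoglu the weak-* closure of `i_{X*}(A)` is compact, so its image under
restriction to `Y` is weak-* closed. -/
theorem exists_mem_weakClosure_ctranspose_eq (f : Y →L[ℂ] X) {A : Set (StrongDual ℂ X)} {r : ℝ}
    (hA : A ⊆ Metric.closedBall 0 r) {g : StrongDual ℂ Y}
    (hg : StrongDual.toWeakDual g ∈ closure (WeakDual.toStrongDual ⁻¹' (ctranspose f '' A))) :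
    ∃ φ : StrongDual ℂ (StrongDual ℂ (StrongDual ℂ X)), ‖φ‖ ≤ r ∧
      StrongDual.toWeakDual φ ∈
        closure (WeakDual.toStrongDual ⁻¹' (inclusionInDoubleDual ℂ (StrongDual ℂ X) '' A)) ∧
      ctranspose f (ctranspose (inclusionInDoubleDual ℂ X) φ) = g := by
  set K := closure (WeakDual.toStrongDual ⁻¹' (inclusionInDoubleDual ℂ (StrongDual ℂ X) '' A))
  have hK_ball : K ⊆ WeakDual.toStrongDual ⁻¹' Metric.closedBall 0 r := by
    refine closure_minimal ?_ (WeakDual.isClosed_closedBall 0 r)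
    rintro _ ⟨a, ha, h⟩
    rw [Set.mem_preimage, ← h, mem_closedBall_zero_iff]
    exact (double_dual_bound ℂ _ a).trans (mem_closedBall_zero_iff.1 (hA ha))
  set restrict := fun φ : WeakDual ℂ (StrongDual ℂ (StrongDual ℂ X)) => StrongDual.toWeakDual
    (ctranspose f (ctranspose (inclusionInDoubleDual ℂ X) (WeakDual.toStrongDual φ)))
  have hT : Continuous restrict :=
    (WeakDual.continuous_ctranspose f).comp (WeakDual.continuous_ctranspose _)
  have hTK : IsClosed (restrict '' K) :=
    (((WeakDual.isCompact_closedBall 0 r).of_isClosed_subset isClosed_closure hK_ball).image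
      hT).isClosed
  have hT_image : WeakDual.toStrongDual ⁻¹' (ctranspose f '' A) ⊆ restrict '' K := by
    rintro w ⟨a, ha, h⟩
    refine ⟨StrongDual.toWeakDual (inclusionInDoubleDual ℂ _ a), subset_closure ⟨a, ha, rfl⟩, ?_⟩
    rw [← WeakDual.toWeakDual_toStrongDual w, ← h]
    rfl
  obtain ⟨φ, hφK, hφg⟩ := closure_minimal hT_image hTK hg
  refine ⟨WeakDual.toStrongDual φ, mem_closedBall_zero_iff.1 (hK_ball hφK), by simpa using hφK, ?_⟩
  simpa [restrict] using hφg

theorem MEmbedded.mem_closure_convexHull_of_mem_weakClosure (hX : MEmbedded X)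
    {f : Y →L[ℂ] X} (hf : ‖f‖ ≤ 1) {A : Set (StrongDual ℂ X)} {g : StrongDual ℂ Y}
    (hA : A ⊆ Metric.closedBall 0 ‖g‖)
    (hg : StrongDual.toWeakDual g ∈ closure (WeakDual.toStrongDual ⁻¹' (ctranspose f '' A))) :
    g ∈ closure (convexHull ℝ (ctranspose f '' A)) := by
  by_contra hg_not
  obtain ⟨F, u, hF_lt, hF_gt⟩ := RCLike.geometric_hahn_banach_closed_point (𝕜 := ℂ)
    (convex_convexHull ℝ _).closure isClosed_closure hg_not
  obtain ⟨φ, hφ_norm, hφ_mem, hφ_eq⟩ := exists_mem_weakClosure_ctranspose_eq f hA hg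
  -- `‖φ‖ ≤ ‖g‖ ≤ ‖φ ∘ i_X‖`, so M-embeddedness puts `φ` in `X*`
  have hφ_fix : φ = tripleDualProjection X φ := by
    refine hX.eq_tripleDualProjection_of_norm_le (hφ_norm.trans ?_)
    rw [← hφ_eq]
    exact norm_ctranspose_apply_le hf _
  set e : StrongDual ℂ (StrongDual ℂ X) := F.comp (ctranspose f)
  have h_closed : IsClosed {ψ : WeakDual ℂ (StrongDual ℂ (StrongDual ℂ X)) | RCLike.re (ψ e) ≤ u} :=
    isClosed_le (RCLike.continuous_re.comp (WeakDual.eval_continuous e)) continuous_const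
  have h_le : RCLike.re (φ e) ≤ u := by
    refine closure_minimal ?_ h_closed hφ_mem
    rintro ψ ⟨a, ha, h⟩
    have hψ : ψ e = F (ctranspose f a) := by
      rw [← WeakDual.toWeakDual_toStrongDual ψ, ← h]
      rfl
    show RCLike.re (ψ e) ≤ u
    rw [hψ]
    exact (hF_lt _ (subset_closure (subset_convexHull ℝ _ ⟨a, ha, rfl⟩))).le
  have h_eq : φ e = F g := by
    rw [hφ_fix, tripleDualProjection_apply, ← hφ_eq]
    rfl
  rw [h_eq] at h_le
  linarith

end WeakStarLift

theorem MEmbedded.separable_subspace_separable_dual_general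
    (X : Type*) [NormedAddCommGroup X] [NormedSpace ℂ X]
    (hX : MEmbedded X) (Y : Subspace ℂ X)
    (hsep : TopologicalSpace.SeparableSpace Y) :
    TopologicalSpace.SeparableSpace (StrongDual ℂ Y) := by
  obtain ⟨D, hD_ball, hD_count, hD_dense⟩ := WeakDual.exists_countable_dense_closedBall ℂ Y 1
  set A := Metric.closedBall (0 : StrongDual ℂ X) 1 ∩ ctranspose Y.subtypeL ⁻¹' D
  have hA : ctranspose Y.subtypeL '' A = D := by
    refine subset_antisymm (fun _ ⟨G, hG, h⟩ => h ▸ hG.2) fun d hd => ?_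
    obtain ⟨G, hG_ext, hG_norm⟩ := exists_extension_norm_eq Y d
    have hG : ctranspose Y.subtypeL G = d := ContinuousLinearMap.ext hG_ext
    exact ⟨G, ⟨by simpa [hG_norm] using hD_ball hd, by rwa [Set.mem_preimage, hG]⟩, hG⟩
  have h_unit : ∀ g : StrongDual ℂ Y, ‖g‖ = 1 → g ∈ (Submodule.span ℂ D).topologicalClosure := by
    intro g hg
    have hg_hull := hX.mem_closure_convexHull_of_mem_weakClosure (Submodule.norm_subtypeL_le Y)
      (hg ▸ Set.inter_subset_left : A ⊆ _) (hA ▸ hD_dense (mem_closedBall_zero_iff.2 hg.le))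
    rw [hA] at hg_hull
    rw [← SetLike.mem_coe, Submodule.topologicalClosure_coe]
    exact closure_mono (convexHull_min Submodule.subset_span
      ((Submodule.span ℂ D).restrictScalars ℝ).convex) hg_hull
  have h_top : (Submodule.span ℂ D).topologicalClosure = ⊤ :=
    Submodule.eq_top_of_forall_norm_eq_one fun g hg => h_unit g hg
  rw [← TopologicalSpace.isSeparable_univ_iff, ← Submodule.top_coe (R := ℂ), ← h_top,
    Submodule.topologicalClosure_coe]
  exact hD_count.isSeparable.span.closure

/-- Every separable closed subspace of an M-embedded complex Banach space has a
separable dual. -/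
theorem MEmbedded.separable_subspace_separable_dual
    (X : Type*) [NormedAddCommGroup X] [NormedSpace ℂ X] [CompleteSpace X]
    (hX : MEmbedded X) (Y : Subspace ℂ X) (hY : IsClosed (Y : Set X))
    (hsep : TopologicalSpace.SeparableSpace Y) :
    TopologicalSpace.SeparableSpace (StrongDual ℂ Y) :=
  MEmbedded.separable_subspace_separable_dual_general X hX Y hsep
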